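/- arXiv:1907.00815 — 4 statements merged into one kernel-verified Lean document; each statement's English description precedes it below -/
import Mathlib

section
/- Let d ≥ 2, let θ₀, θ₁ ∈ ℝ, and let A₀ : S¹ → GL_d(ℝ) be a continuous map. Then the set of continuous maps A₁ : S¹ → GL_d(ℝ) that are twisting with respect to A₀ is dense in the space of continuous maps S¹ → GL_d(ℝ) equipped with the uniform distance d_{C⁰}(A,B) = sup_t ‖A(t) − B(t)‖. -/
open MeasureTheory Filter
open scoped Matrix.Norms.L2Operator

/-- The twisting condition for the random product of quasi-periodic cocycles: for every pair
of nonempty subsets `I, J ⊆ {1,…,d}` with `|I| = |J|`, the function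
`t ↦ |log |det((A₀(h(t))⁻¹ A₁(t))_{I,J})||` is integrable on `[0,1]`, where `h(t) = t+θ₁−θ₀`
and `M_{I,J}` is the square submatrix of `M` with rows in `I` and columns in `J`. -/
def Twisting {d : ℕ} (θ₀ θ₁ : ℝ) (A₀ A₁ : ℝ → Matrix (Fin d) (Fin d) ℝ) : Prop :=
  ∀ (I J : Finset (Fin d)), I.Nonempty → ∀ h : J.card = I.card,
    IntegrableOn
      (fun t : ℝ => abs (Real.log (abs
        ((((A₀ (t + θ₁ - θ₀))⁻¹ * A₁ t)).submatrix
            (fun a : Fin I.card => (I.orderIsoOfFin rfl a).1)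
            (fun b : Fin I.card => (J.orderIsoOfFin h b).1)).det)))
      (Set.Icc (0:ℝ) 1) volume

/-- A continuous map `S¹ → GL_d(ℝ)`: continuous, 1-periodic, invertible values. -/
def IsC0GL {d : ℕ} (A : ℝ → Matrix (Fin d) (Fin d) ℝ) : Prop :=
  Continuous A ∧ (∀ t, A (t + 1) = A t) ∧ ∀ t, (A t).det ≠ 0

/-- Uniform distance `sup_t ‖A(t) − B(t)‖` (ℓ²-operator norm). -/
noncomputable def dC0Map {d : ℕ} (A B : ℝ → Matrix (Fin d) (Fin d) ℝ) : ℝ :=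
  ⨆ t : Set.Icc (0:ℝ) 1, ‖A t - B t‖

/-!
Write `H₀(t) = A₀(h(t))⁻¹ A₁(t)`. If `H` is 1-periodic and uniformly close to `H₀`, then
`B₁ = (A₀ ∘ h) · H` is uniformly close to `A₁`, is invertible (invertibility is an open condition
and `H₀` takes values in a compact subset of `GL_d(ℝ)`), and its twisting condition only involves
the minors of `H`. Take for `H` the piecewise linear interpolation of `H₀` at the points `j / N`,
with nodes perturbed so that all their minors are nonzero (a dense condition: each minor is
polynomial along lines and nonzero somewhere). On each piece every minor of `H` is then a
polynomial in `t` which does not vanish at the left node, hence has finitely many zeros, and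
`|log |·||` of it is integrable.
-/

open scoped Polynomial
open Set

namespace Matrix

theorem exists_eval_eq_det_add_smul {n R : Type*} [Fintype n] [DecidableEq n] [CommRing R]
    (A B : Matrix n n R) : ∃ p : R[X], ∀ s : R, p.eval s = (A + s • B).det := by
  refine ⟨(A.map Polynomial.C + (Polynomial.X : R[X]) • B.map Polynomial.C).det, fun s => ?_⟩
  rw [← Polynomial.coe_evalRingHom, RingHom.map_det]
  congr 1
  ext i j
  simp only [RingHom.mapMatrix_apply, map_apply, add_apply, smul_apply, smul_eq_mul,
    Polynomial.coe_evalRingHom, Polynomial.eval_add, Polynomial.eval_mul, Polynomial.eval_C,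
    Polynomial.eval_X]

theorem dense_setOf_det_submatrix_ne_zero {m n k : Type*} [Fintype k] [DecidableEq k]
    {f : k → m} {g : k → n} (hf : f.Injective) (hg : g.Injective) :
    Dense {M : Matrix m n ℝ | (M.submatrix f g).det ≠ 0} := by
  intro M
  let U : Matrix m n ℝ := of fun i j =>
    Function.extend f (fun a => Function.extend g ((1 : Matrix k k ℝ) a) 0 j) 0 i
  have hU : U.submatrix f g = 1 := by
    ext a b
    simp [U, hf.extend_apply, hg.extend_apply]
  obtain ⟨p, hp⟩ := exists_eval_eq_det_add_smul (M.submatrix f g) (1 - M.submatrix f g)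
  have hp0 : p ≠ 0 := fun h => by simpa [h] using hp 1
  have hline : MapsTo (fun s : ℝ => M + s • (U - M)) {s | p.IsRoot s}ᶜ
      {M | (M.submatrix f g).det ≠ 0} := by
    intro s hs
    have : (M + s • (U - M)).submatrix f g = M.submatrix f g + s • (1 - M.submatrix f g) := by
      rw [← hU]; rfl
    simpa [this, ← hp] using hs
  have h0 : (0 : ℝ) ∈ closure {s | p.IsRoot s}ᶜ := by
    rw [((p.finite_setOfPred_isRoot hp0).countable.dense_compl ℝ).closure_eq]
    exact mem_univ 0
  simpa using map_mem_closure (by fun_prop) h0 hline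

def minor {R : Type*} [CommRing R] {d : ℕ} (I J : Finset (Fin d)) (h : J.card = I.card)
    (M : Matrix (Fin d) (Fin d) R) : R :=
  (M.submatrix (fun a : Fin I.card => (I.orderIsoOfFin rfl a).1)
    (fun b : Fin I.card => (J.orderIsoOfFin h b).1)).det

theorem exists_eval_eq_minor_add_smul {R : Type*} [CommRing R] {d : ℕ} (I J : Finset (Fin d))
    (h : J.card = I.card) (A B : Matrix (Fin d) (Fin d) R) :
    ∃ p : R[X], ∀ s : R, p.eval s = minor I J h (A + s • B) :=
  exists_eval_eq_det_add_smul _ _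

theorem dense_setOf_forall_minor_ne_zero (d : ℕ) :
    Dense {M : Matrix (Fin d) (Fin d) ℝ | ∀ I J h, minor I J h M ≠ 0} := by
  have : {M : Matrix (Fin d) (Fin d) ℝ | ∀ I J h, minor I J h M ≠ 0} =
      ⋂ τ : {τ : Finset (Fin d) × Finset (Fin d) // τ.2.card = τ.1.card},
        {M | minor τ.1.1 τ.1.2 τ.2 M ≠ 0} := by
    ext; simp
  rw [this]
  refine dense_iInter_of_isOpen (fun τ => ?_) (fun τ => ?_)
  · exact isOpen_ne_fun (continuous_id.matrix_submatrix _ _).matrix_det continuous_const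
  · exact dense_setOf_det_submatrix_ne_zero (Subtype.val_injective.comp (OrderIso.injective _))
      (Subtype.val_injective.comp (OrderIso.injective _))

end Matrix

def tent (u : ℝ) : ℝ := max 0 (1 - |u|)

@[fun_prop]
theorem continuous_tent : Continuous tent := by unfold tent; fun_prop

theorem tent_zero : tent 0 = 1 := by simp [tent]

theorem tent_eq_zero {u : ℝ} (hu : 1 ≤ |u|) : tent u = 0 := max_eq_left (by linarith)

theorem tent_of_mem_Icc {s : ℝ} (hs : s ∈ Icc (0 : ℝ) 1) : tent s = 1 - s := by
  rw [tent, abs_of_nonneg hs.1, max_eq_right (by linarith [hs.2])]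

theorem tent_sub_one_of_mem_Icc {s : ℝ} (hs : s ∈ Icc (0 : ℝ) 1) : tent (s - 1) = s := by
  rw [tent, abs_of_nonpos (by linarith [hs.2]), max_eq_right (by linarith [hs.1])]
  ring

theorem tent_intCast {k : ℤ} (hk : k ≠ 0) : tent k = 0 :=
  tent_eq_zero (by rw [← Int.cast_abs]; exact_mod_cast Int.one_le_abs hk)

theorem mem_Icc_div_iff {N : ℝ} (hN : 0 < N) {t i : ℝ} :
    t ∈ Icc (i / N) ((i + 1) / N) ↔ N * t - i ∈ Icc 0 1 := by
  simp only [mem_Icc, div_le_iff₀ hN, le_div_iff₀ hN]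
  constructor <;> rintro ⟨h1, h2⟩ <;> constructor <;> linarith

section PiecewiseLinear

variable {E : Type*} [AddCommGroup E] [Module ℝ E]

def pwLinear (N : ℕ) (V : ℕ → E) (t : ℝ) : E :=
  ∑ j ∈ Finset.range (N + 1), tent (N * t - j) • V j

theorem continuous_pwLinear [TopologicalSpace E] [IsTopologicalAddGroup E] [ContinuousSMul ℝ E]
    (N : ℕ) (V : ℕ → E) : Continuous (pwLinear N V) := by
  unfold pwLinear
  fun_prop

theorem pwLinear_div {N i : ℕ} (hN : 0 < N) (hi : i ≤ N) (V : ℕ → E) :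
    pwLinear N V (i / N) = V i := by
  rw [pwLinear, Finset.sum_eq_single_of_mem i (Finset.mem_range.2 (by omega))]
  · rw [mul_div_cancel₀ _ (by positivity), sub_self, tent_zero, one_smul]
  · intro j _ hj
    rw [mul_div_cancel₀ _ (by positivity), show (i : ℝ) - j = ((i - j : ℤ) : ℝ) by push_cast; ring,
      tent_intCast (by omega), zero_smul]

theorem pwLinear_of_mem_Icc {N i : ℕ} (hi : i < N) (V : ℕ → E) {t : ℝ}
    (ht : t ∈ Icc ((i : ℝ) / N) ((i + 1) / N)) :
    pwLinear N V t = (1 - (N * t - i)) • V i + (N * t - i) • V (i + 1) := by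
  have hN : (0 : ℝ) < N := by exact_mod_cast (Nat.zero_le i).trans_lt hi
  have hs := (mem_Icc_div_iff hN).1 ht
  rw [pwLinear, Finset.sum_eq_add_of_mem i (i + 1) (Finset.mem_range.2 (by omega))
    (Finset.mem_range.2 (by omega)) (by omega)]
  · push_cast
    rw [tent_of_mem_Icc hs, show (N : ℝ) * t - (i + 1) = N * t - i - 1 by ring,
      tent_sub_one_of_mem_Icc hs]
  · rintro j - ⟨hji, hji1⟩
    rw [tent_eq_zero, zero_smul]
    rcases Nat.lt_or_gt_of_ne hji with h | h
    · have : (j : ℝ) + 1 ≤ i := by exact_mod_cast h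
      exact le_abs.2 (Or.inl (by linarith [hs.1]))
    · have : (i : ℝ) + 2 ≤ j := by exact_mod_cast (by omega : i + 2 ≤ j)
      exact le_abs.2 (Or.inr (by linarith [hs.2]))

theorem exists_mem_Icc_div {N : ℕ} (hN : 0 < N) {t : ℝ} (ht : t ∈ Icc (0 : ℝ) 1) :
    ∃ i < N, t ∈ Icc ((i : ℝ) / N) ((i + 1) / N) := by
  have hN' : (0 : ℝ) < N := by exact_mod_cast hN
  rcases ht.2.lt_or_eq with ht1 | rfl
  · have hfloor : ⌊N * t⌋₊ < N := by
      rw [Nat.floor_lt (by nlinarith [ht.1])]; nlinarith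
    refine ⟨⌊N * t⌋₊, hfloor, ?_, ?_⟩
    · rw [div_le_iff₀ hN', mul_comm]; exact Nat.floor_le (by nlinarith [ht.1])
    · rw [le_div_iff₀ hN', mul_comm]; exact (Nat.lt_floor_add_one _).le
  · refine ⟨N - 1, by omega, ?_, ?_⟩ <;> rw [Nat.cast_sub (by omega)] <;> push_cast
    · rw [div_le_one hN']; linarith
    · rw [sub_add_cancel, div_self hN'.ne']

end PiecewiseLinear

section PiecewiseLinearNormed

variable {E : Type*} [SeminormedAddCommGroup E] [NormedSpace ℝ E]

theorem dist_pwLinear_lt {N : ℕ} (hN : 0 < N) {V : ℕ → E} {F : ℝ → E} {κ : ℝ}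
    (hV : ∀ j ≤ N, dist (V j) (F (j / N)) < κ / 2)
    (hF : ∀ t ∈ Icc (0 : ℝ) 1, ∀ t' ∈ Icc (0 : ℝ) 1, dist t t' ≤ 1 / N →
      dist (F t) (F t') < κ / 2)
    {t : ℝ} (ht : t ∈ Icc (0 : ℝ) 1) : dist (pwLinear N V t) (F t) < κ := by
  have hN' : (0 : ℝ) < N := by exact_mod_cast hN
  obtain ⟨i, hi, hti⟩ := exists_mem_Icc_div hN ht
  have hs := (mem_Icc_div_iff hN').1 hti
  have hnode : ∀ j ≤ N, |t - j / N| ≤ 1 / N → V j ∈ Metric.ball (F t) κ := fun j hj hjt =>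
    calc dist (V j) (F t) ≤ dist (V j) (F (j / N)) + dist (F (j / N)) (F t) := dist_triangle _ _ _
      _ < κ / 2 + κ / 2 := by
        refine add_lt_add (hV j hj) (hF _ ⟨by positivity, ?_⟩ t ht ?_)
        · exact div_le_one_of_le₀ (by exact_mod_cast hj) hN'.le
        · rwa [Real.dist_eq, abs_sub_comm]
      _ = κ := add_halves κ
  rw [pwLinear_of_mem_Icc hi V hti]
  refine convex_ball _ _ (hnode i hi.le ?_) (hnode (i + 1) hi ?_) (by linarith [hs.2]) hs.1
    (by ring)
  · rw [show t - i / N = (N * t - i) / N by field_simp, abs_div, abs_of_pos hN',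
      abs_of_nonneg hs.1]
    gcongr
    exact hs.2
  · push_cast
    rw [show t - (i + 1) / N = (N * t - i - 1) / N by field_simp; ring, abs_div, abs_of_pos hN',
      abs_of_nonpos (by linarith [hs.2])]
    gcongr
    linarith [hs.1]

end PiecewiseLinearNormed

theorem exists_pwLinear_near_of_dense {E : Type*} [SeminormedAddCommGroup E] [NormedSpace ℝ E]
    {G : Set E} (hG : Dense G) {F : ℝ → E} (hF : ContinuousOn F (Icc 0 1)) (hF01 : F 0 = F 1)
    {κ : ℝ} (hκ : 0 < κ) :
    ∃ N > 0, ∃ V : ℕ → E, (∀ j, V j ∈ G) ∧ V N = V 0 ∧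
      ∀ t ∈ Icc (0 : ℝ) 1, dist (pwLinear N V t) (F t) < κ := by
  obtain ⟨η, hη, hFη⟩ := Metric.uniformContinuousOn_iff.1
    (isCompact_Icc.uniformContinuousOn_of_continuous hF) (κ / 2) (half_pos hκ)
  obtain ⟨n, hn⟩ := exists_nat_one_div_lt hη
  set N := n + 1
  choose W hWG hW using fun j : ℕ => hG.exists_dist_lt (F (j / N)) (half_pos hκ)
  refine ⟨N, n.succ_pos, fun j => W (j % N), fun j => hWG _, by simp, fun t ht => ?_⟩
  refine dist_pwLinear_lt n.succ_pos (fun j hj => ?_)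
    (fun t ht t' ht' htt' => hFη t ht t' ht' (htt'.trans_lt (by exact_mod_cast hn))) ht
  rcases hj.lt_or_eq with hj | rfl
  · rw [Nat.mod_eq_of_lt hj, dist_comm]
    exact hW j
  · rw [Nat.mod_self, dist_comm, div_self (by positivity), ← hF01]
    simpa using hW 0

theorem Polynomial.integrableOn_abs_log_abs_eval (p : ℝ[X]) {a b : ℝ} (hab : a ≤ b) :
    IntegrableOn (fun t => |Real.log (|p.eval t|)|) (Icc a b) := by
  have hp : MeromorphicOn (fun t => p.eval t) (uIcc a b) :=
    ((AnalyticOnNhd.eval_polynomial p).mono (subset_univ _)).meromorphicOn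
  rw [← intervalIntegrable_iff_integrableOn_Icc_of_le hab]
  simpa only [Real.log_abs, Function.comp_apply] using hp.intervalIntegrable_log.abs

namespace Matrix

variable {d : ℕ}

theorem exists_minor_pwLinear_eq_eval {N i : ℕ} (hi : i < N) {V : ℕ → Matrix (Fin d) (Fin d) ℝ}
    {I J : Finset (Fin d)} {h : J.card = I.card} (hV : minor I J h (V i) ≠ 0) :
    ∃ p : ℝ[X], p ≠ 0 ∧
      ∀ t ∈ Icc ((i : ℝ) / N) ((i + 1) / N), minor I J h (pwLinear N V t) = p.eval t := by
  set D := V (i + 1) - V i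
  have haffine : ∀ t ∈ Icc ((i : ℝ) / N) ((i + 1) / N),
      pwLinear N V t = (V i - (i : ℝ) • D) + t • ((N : ℝ) • D) := fun t ht => by
    rw [pwLinear_of_mem_Icc hi V ht]
    module
  obtain ⟨p, hp⟩ := exists_eval_eq_minor_add_smul I J h (V i - (i : ℝ) • D) ((N : ℝ) • D)
  have hpiece : ∀ t ∈ Icc ((i : ℝ) / N) ((i + 1) / N), minor I J h (pwLinear N V t) = p.eval t :=
    fun t ht => by rw [haffine t ht, hp]
  have hleft : (i : ℝ) / N ∈ Icc ((i : ℝ) / N) ((i + 1) / N) :=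
    ⟨le_rfl, by gcongr; linarith⟩
  refine ⟨p, fun hp0 => hV ?_, hpiece⟩
  rw [← pwLinear_div ((Nat.zero_le i).trans_lt hi) hi.le V, hpiece _ hleft, hp0,
    Polynomial.eval_zero]

theorem integrableOn_abs_log_abs_minor_pwLinear {N : ℕ} (hN : 0 < N)
    {V : ℕ → Matrix (Fin d) (Fin d) ℝ} (hV : ∀ j I J h, minor I J h (V j) ≠ 0)
    (I J : Finset (Fin d)) (h : J.card = I.card) :
    IntegrableOn (fun t => |Real.log (|minor I J h (pwLinear N V t)|)|) (Icc 0 1) := by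
  have hcover : Icc (0 : ℝ) 1 ⊆ ⋃ i ∈ Finset.range N, Icc ((i : ℝ) / N) ((i + 1) / N) := by
    intro t ht
    obtain ⟨i, hi, hti⟩ := exists_mem_Icc_div hN ht
    exact mem_biUnion (Finset.mem_range.2 hi) hti
  refine IntegrableOn.mono_set ?_ hcover
  refine integrableOn_finset_iUnion.2 fun i hi => ?_
  obtain ⟨p, -, hp⟩ := exists_minor_pwLinear_eq_eval (Finset.mem_range.1 hi) (hV i I J h)
  refine (p.integrableOn_abs_log_abs_eval ?_).congr_fun (fun t ht => ?_) measurableSet_Icc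
  · gcongr; linarith
  · rw [hp t ht]

end Matrix

open Matrix in
theorem exists_periodic_near_integrableOn_abs_log_abs_minor {d : ℕ}
    {H₀ : ℝ → Matrix (Fin d) (Fin d) ℝ} (hc : Continuous H₀) (hper : Function.Periodic H₀ 1)
    {κ : ℝ} (hκ : 0 < κ) :
    ∃ H : ℝ → Matrix (Fin d) (Fin d) ℝ, Continuous H ∧ Function.Periodic H 1 ∧
      (∀ t, dist (H t) (H₀ t) < κ) ∧
      ∀ I J h, IntegrableOn (fun t => |Real.log (|minor I J h (H t)|)|) (Icc 0 1) := by
  obtain ⟨N, hN, V, hV, hVN, hnear⟩ := exists_pwLinear_near_of_dense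
    (dense_setOf_forall_minor_ne_zero d) hc.continuousOn (by simpa using (hper 0).symm) hκ
  have hL01 : pwLinear N V 0 = pwLinear N V 1 := by
    have h0 := pwLinear_div hN (Nat.zero_le N) V
    have h1 := pwLinear_div hN le_rfl V
    rw [Nat.cast_zero, zero_div] at h0
    rw [div_self (by positivity)] at h1
    rw [h0, h1, hVN]
  have hfract : ∀ t, Int.fract t ∈ Icc (0 : ℝ) 1 := fun t =>
    ⟨Int.fract_nonneg t, (Int.fract_lt_one t).le⟩
  refine ⟨pwLinear N V ∘ Int.fract, (continuous_pwLinear N V).continuousOn.comp_fract'' hL01,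
    (Int.fract_periodic ℝ).comp _, fun t => ?_, fun I J h => ?_⟩
  · have hH₀ : H₀ (Int.fract t) = H₀ t := by
      simpa [← Int.self_sub_floor] using hper.sub_int_mul_eq ⌊t⌋
    rw [Function.comp_apply, ← hH₀]
    exact hnear _ (hfract t)
  · refine (integrableOn_abs_log_abs_minor_pwLinear hN hV I J h).congr_fun (fun t ht => ?_)
      measurableSet_Icc
    rcases ht.2.lt_or_eq with ht1 | rfl
    · rw [Function.comp_apply, Int.fract_eq_self.2 ⟨ht.1, ht1⟩]
    · rw [Function.comp_apply, Int.fract_one, hL01]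

namespace IsC0GL

variable {d : ℕ} {A B : ℝ → Matrix (Fin d) (Fin d) ℝ}

theorem comp_add_const (hA : IsC0GL A) (c : ℝ) : IsC0GL fun t => A (t + c) :=
  ⟨hA.1.comp (continuous_add_const c), fun t => by simp only [add_right_comm t 1 c, hA.2.1],
    fun t => hA.2.2 _⟩

theorem inv_mul (hA : IsC0GL A) (hB : IsC0GL B) : IsC0GL fun t => (A t)⁻¹ * B t := by
  have hinv : Continuous fun t => (A t)⁻¹ := continuous_iff_continuousAt.2 fun t =>
    (continuousAt_matrix_inv _ (by
      rw [Ring.inverse_eq_inv']; exact continuousAt_inv₀ (hA.2.2 t))).comp hA.1.continuousAt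
  refine ⟨hinv.mul hB.1, fun t => by simp only [hA.2.1 t, hB.2.1 t], fun t => ?_⟩
  rw [Matrix.det_mul]
  exact mul_ne_zero (Matrix.isUnit_nonsing_inv_det _ (isUnit_iff_ne_zero.2 (hA.2.2 t))).ne_zero
    (hB.2.2 t)

theorem exists_pos_forall_dist_lt_det_ne_zero (hA : IsC0GL A) :
    ∃ δ > 0, ∀ t M, dist M (A t) < δ → M.det ≠ 0 := by
  obtain ⟨δ, hδ, hsub⟩ := (Function.Periodic.compact_of_continuous hA.2.1 one_ne_zero hA.1)
    |>.exists_thickening_subset_open (isOpen_ne_fun (continuous_id.matrix_det) continuous_const)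
      (range_subset_iff.2 hA.2.2)
  exact ⟨δ, hδ, fun t M hM => hsub (Metric.mem_thickening_iff.2 ⟨A t, mem_range_self t, hM⟩)⟩

end IsC0GL

theorem twisting_shift_mul {d : ℕ} {θ₀ θ₁ : ℝ} {A₀ H : ℝ → Matrix (Fin d) (Fin d) ℝ}
    (hA₀ : ∀ t, (A₀ t).det ≠ 0)
    (hH : ∀ I J h, IntegrableOn (fun t => |Real.log (|Matrix.minor I J h (H t)|)|) (Icc 0 1)) :
    Twisting θ₀ θ₁ A₀ fun t => A₀ (t + θ₁ - θ₀) * H t := by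
  intro I J _ h
  simp only [Matrix.nonsing_inv_mul_cancel_left _ _ (isUnit_iff_ne_zero.2 (hA₀ _))]
  exact hH I J h

theorem dC0Map_le {d : ℕ} {A B : ℝ → Matrix (Fin d) (Fin d) ℝ} {c : ℝ}
    (h : ∀ t ∈ Icc (0 : ℝ) 1, ‖A t - B t‖ ≤ c) : dC0Map A B ≤ c :=
  ciSup_le fun t => h t t.2

theorem twisting_dense_C0_general (d : ℕ) (θ₀ θ₁ : ℝ)
    (A₀ : ℝ → Matrix (Fin d) (Fin d) ℝ) (hA₀ : IsC0GL A₀) :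
    ∀ A₁, IsC0GL A₁ → ∀ ε > 0,
      ∃ B₁, IsC0GL B₁ ∧ dC0Map A₁ B₁ < ε ∧ Twisting θ₀ θ₁ A₀ B₁ := by
  intro A₁ hA₁ ε hε
  have hg : IsC0GL fun t => A₀ (t + θ₁ - θ₀) := by
    simpa only [add_sub_assoc] using hA₀.comp_add_const (θ₁ - θ₀)
  set g := fun t => A₀ (t + θ₁ - θ₀)
  have hH₀ := hg.inv_mul hA₁
  obtain ⟨δ, hδ, hdet⟩ := hH₀.exists_pos_forall_dist_lt_det_ne_zero
  obtain ⟨C, hC, hgC⟩ :=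
    (Function.Periodic.isBounded_of_continuous hg.2.1 one_ne_zero hg.1).exists_pos_norm_le
  obtain ⟨H, hHc, hHper, hHnear, hHint⟩ := exists_periodic_near_integrableOn_abs_log_abs_minor
    hH₀.1 hH₀.2.1 (lt_min hδ (div_pos hε (mul_pos two_pos hC)))
  refine ⟨fun t => g t * H t, ⟨hg.1.mul hHc, fun t => by simp only [hg.2.1 t, hHper t],
    fun t => ?_⟩, ?_, twisting_shift_mul hA₀.2.2 hHint⟩
  · rw [Matrix.det_mul]
    exact mul_ne_zero (hg.2.2 t) (hdet t _ ((hHnear t).trans_le (min_le_left _ _)))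
  refine (dC0Map_le fun t _ => ?_).trans_lt (by field_simp; linarith : C * (ε / (2 * C)) < ε)
  calc ‖A₁ t - g t * H t‖ = ‖g t * ((g t)⁻¹ * A₁ t - H t)‖ := by
        rw [mul_sub, Matrix.mul_nonsing_inv_cancel_left _ _ (isUnit_iff_ne_zero.2 (hg.2.2 t))]
    _ ≤ ‖g t‖ * dist (H t) ((g t)⁻¹ * A₁ t) := by
        rw [dist_comm, dist_eq_norm]
        exact norm_mul_le _ _
    _ ≤ C * (ε / (2 * C)) := by
        gcongr
        · exact hgC _ (mem_range_self t)
        · exact (hHnear t).le.trans (min_le_right _ _)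

/-- For a fixed continuous map `A₀ : S¹ → GL_d(ℝ)`, the set of continuous maps
`A₁ : S¹ → GL_d(ℝ)` twisting with respect to `A₀` is dense for the uniform distance. -/
theorem twisting_dense_C0 (d : ℕ) (hd : 2 ≤ d) (θ₀ θ₁ : ℝ)
    (A₀ : ℝ → Matrix (Fin d) (Fin d) ℝ) (hA₀ : IsC0GL A₀) :
    ∀ A₁, IsC0GL A₁ → ∀ ε > 0,
      ∃ B₁, IsC0GL B₁ ∧ dC0Map A₁ B₁ < ε ∧ Twisting θ₀ θ₁ A₀ B₁ :=
  twisting_dense_C0_general d θ₀ θ₁ A₀ hA₀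
end

section
/- The set of d-tuples (a₁,…,a_d) of continuous nowhere-vanishing functions S¹ → ℝ with the following property is open and dense in the space of such d-tuples equipped with the sup distance max_i sup_t |a_i(t) − b_i(t)|: setting λ_i = ∫₀¹ log|a_i(s)| ds, for every 1 ≤ j ≤ d−1 and all distinct j-element subsets I ≠ J of {1,…,d} one has Σ_{i∈I} λ_i ≠ Σ_{i∈J} λ_i. -/
open MeasureTheory Filter

/-- A `d`-tuple of continuous, 1-periodic, nowhere-vanishing functions `S¹ → ℝ`. -/
def IsNVTuple {d : ℕ} (a : Fin d → ℝ → ℝ) : Prop :=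
  ∀ i, Continuous (a i) ∧ (∀ t, a i (t + 1) = a i t) ∧ ∀ t, a i t ≠ 0

/-- sup distance on `d`-tuples of functions. -/
noncomputable def dSupT {d : ℕ} (a b : Fin d → ℝ → ℝ) : ℝ :=
  ⨆ i, ⨆ t : Set.Icc (0:ℝ) 1, |a i t - b i t|

/-- The pinching condition for the diagonal cocycle `diag(a₁,…,a_d)`: with
`λ_i = ∫₀¹ log|a_i|`, all sums `Σ_{i∈I} λ_i` over `j`-element index sets, `1 ≤ j ≤ d−1`,
are pairwise distinct. -/
def PinchingTuple {d : ℕ} (a : Fin d → ℝ → ℝ) : Prop :=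
  ∀ I J : Finset (Fin d), 1 ≤ I.card → I.card ≤ d - 1 → I.card = J.card → I ≠ J →
    (∑ i ∈ I, ∫ s in (0:ℝ)..1, Real.log |a i s|) ≠
      ∑ i ∈ J, ∫ s in (0:ℝ)..1, Real.log |a i s|

/-!
The Lyapunov exponent `∫₀¹ log |f|` depends continuously on `f` in the sup distance as long as
`f` stays away from `0`, and the pinching condition only asks finitely many linear forms in the
exponents to be nonzero; hence it is an open condition. For density, multiplying `a_i` by
`exp (r 2^i)` shifts `λ_i` by `r 2^i`. Since distinct subsets of `{2^i}` have distinct sums, each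
coincidence `Σ_I λ_i = Σ_J λ_i` with `I ≠ J` survives for at most one value of `r`, so an
arbitrarily small `r` makes the tuple pinching.
-/

open Set Topology Real

noncomputable def lyapunovExponent (f : ℝ → ℝ) : ℝ :=
  ∫ s in (0:ℝ)..1, log |f s|

def PinchingExponents {d : ℕ} (l : Fin d → ℝ) : Prop :=
  ∀ I J : Finset (Fin d), 1 ≤ I.card → I.card ≤ d - 1 → I.card = J.card → I ≠ J →
    ∑ i ∈ I, l i ≠ ∑ i ∈ J, l i

theorem pinchingTuple_iff {d : ℕ} {a : Fin d → ℝ → ℝ} :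
    PinchingTuple a ↔ PinchingExponents fun i => lyapunovExponent (a i) :=
  Iff.rfl

theorem isOpen_setOf_pinchingExponents (d : ℕ) :
    IsOpen {l : Fin d → ℝ | PinchingExponents l} := by
  simp only [PinchingExponents, ofPred_forall]
  repeat refine isOpen_iInter_of_finite fun _ => ?_
  exact isOpen_ne_fun (by fun_prop) (by fun_prop)

theorem injective_sum_two_pow (d : ℕ) :
    Function.Injective fun I : Finset (Fin d) => ∑ i ∈ I, (2:ℝ) ^ (i : ℕ) := by
  intro I J h
  apply Finset.map_injective Fin.valEmbedding
  apply Finset.geomSum_injective le_rfl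
  simp only [Finset.sum_map, Fin.valEmbedding_apply]
  rw [← Nat.cast_inj (R := ℝ)]
  push_cast
  exact h

theorem finite_setOf_sum_add_mul_eq {ι : Type*} [Fintype ι] (l w : ι → ℝ)
    (hw : Function.Injective fun I : Finset ι => ∑ i ∈ I, w i) :
    {r : ℝ | ∃ I J : Finset ι, I ≠ J ∧
      ∑ i ∈ I, (l i + r * w i) = ∑ i ∈ J, (l i + r * w i)}.Finite := by
  refine (finite_range fun p : Finset ι × Finset ι =>
    (∑ i ∈ p.2, l i - ∑ i ∈ p.1, l i) / (∑ i ∈ p.1, w i - ∑ i ∈ p.2, w i)).subset ?_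
  rintro r ⟨I, J, hIJ, h⟩
  have hw' : ∑ i ∈ I, w i - ∑ i ∈ J, w i ≠ 0 := sub_ne_zero.2 (hw.ne hIJ)
  simp only [Finset.sum_add_distrib, ← Finset.mul_sum] at h
  refine ⟨(I, J), ?_⟩
  field_simp
  linarith

theorem abs_log_sub_log_le {m x y : ℝ} (hm : 0 < m) (hx : m ≤ x) (hy : m ≤ y) :
    |log x - log y| ≤ |x - y| / m := by
  wlog h : y ≤ x
  · rw [abs_sub_comm, abs_sub_comm x y]
    exact this hm hy hx (le_of_not_ge h)
  have hy0 : 0 < y := hm.trans_le hy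
  have hx0 : 0 < x := hy0.trans_le h
  rw [abs_of_nonneg (sub_nonneg.2 (log_le_log hy0 h)), abs_of_nonneg (sub_nonneg.2 h),
    ← log_div hx0.ne' hy0.ne']
  calc log (x / y) ≤ x / y - 1 := log_le_sub_one_of_pos (div_pos hx0 hy0)
    _ = (x - y) / y := by field_simp
    _ ≤ (x - y) / m := by gcongr

theorem intervalIntegrable_log_abs_of_continuousOn {f : ℝ → ℝ} (hf : ContinuousOn f (Icc 0 1))
    (hf0 : ∀ t ∈ Icc (0:ℝ) 1, f t ≠ 0) :
    IntervalIntegrable (fun s => log |f s|) volume 0 1 :=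
  (hf.abs.log fun t ht => abs_ne_zero.2 (hf0 t ht)).intervalIntegrable_of_Icc zero_le_one

theorem abs_lyapunovExponent_sub_le {f g : ℝ → ℝ} (hf : ContinuousOn f (Icc 0 1))
    (hg : ContinuousOn g (Icc 0 1)) {m ε : ℝ} (hm : 0 < m)
    (hfm : ∀ t ∈ Icc (0:ℝ) 1, m ≤ |f t|) (hgm : ∀ t ∈ Icc (0:ℝ) 1, m ≤ |g t|)
    (hfg : ∀ t ∈ Icc (0:ℝ) 1, |f t - g t| ≤ ε) :
    |lyapunovExponent f - lyapunovExponent g| ≤ ε / m := by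
  have hf0 : ∀ t ∈ Icc (0:ℝ) 1, f t ≠ 0 := fun t ht => abs_pos.1 (hm.trans_le (hfm t ht))
  have hg0 : ∀ t ∈ Icc (0:ℝ) 1, g t ≠ 0 := fun t ht => abs_pos.1 (hm.trans_le (hgm t ht))
  rw [lyapunovExponent, lyapunovExponent, ← Real.norm_eq_abs, ← intervalIntegral.integral_sub
    (intervalIntegrable_log_abs_of_continuousOn hf hf0)
    (intervalIntegrable_log_abs_of_continuousOn hg hg0)]
  refine (intervalIntegral.norm_integral_le_of_norm_le_const (C := ε / m) fun t ht => ?_).trans_eq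
    (by simp)
  rw [uIoc_of_le zero_le_one] at ht
  have ht' : t ∈ Icc (0:ℝ) 1 := Ioc_subset_Icc_self ht
  calc ‖log |f t| - log |g t|‖ ≤ abs (|f t| - |g t|) / m :=
        abs_log_sub_log_le hm (hfm t ht') (hgm t ht')
    _ ≤ ε / m := by gcongr; exact (abs_abs_sub_abs_le_abs_sub _ _).trans (hfg t ht')

theorem eventually_abs_lyapunovExponent_sub_lt {f : ℝ → ℝ} (hf : ContinuousOn f (Icc 0 1))
    (hf0 : ∀ t ∈ Icc (0:ℝ) 1, f t ≠ 0) {δ : ℝ} (hδ : 0 < δ) :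
    ∀ᶠ ε in 𝓝[>] 0, ∀ g, ContinuousOn g (Icc 0 1) → (∀ t ∈ Icc (0:ℝ) 1, |f t - g t| ≤ ε) →
      |lyapunovExponent f - lyapunovExponent g| < δ := by
  obtain ⟨t₀, ht₀, hmin⟩ := isCompact_Icc.exists_isMinOn (nonempty_Icc.2 zero_le_one) hf.abs
  set m := |f t₀|
  have hm : 0 < m := abs_pos.2 (hf0 t₀ ht₀)
  filter_upwards [Ioo_mem_nhdsGT (show (0:ℝ) < min (m / 2) (δ * m / 2) by positivity)]
    with ε ⟨_, hε⟩ g hg hfg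
  have hfm : ∀ t ∈ Icc (0:ℝ) 1, m ≤ |f t| := fun t ht => hmin ht
  have hgm : ∀ t ∈ Icc (0:ℝ) 1, m / 2 ≤ |g t| := fun t ht => by
    linarith [hfm t ht, hfg t ht, abs_sub_abs_le_abs_sub (f t) (g t),
      min_le_left (m / 2) (δ * m / 2)]
  calc |lyapunovExponent f - lyapunovExponent g|
      ≤ ε / (m / 2) := abs_lyapunovExponent_sub_le hf hg (by positivity)
        (fun t ht => (half_le_self hm.le).trans (hfm t ht)) hgm hfg
    _ < δ := by
      rw [div_lt_iff₀ (by positivity)]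
      linarith [min_le_right (m / 2) (δ * m / 2)]

theorem abs_sub_le_dSupT {d : ℕ} {a b : Fin d → ℝ → ℝ} (ha : ∀ i, ContinuousOn (a i) (Icc 0 1))
    (hb : ∀ i, ContinuousOn (b i) (Icc 0 1)) (i : Fin d) {t : ℝ} (ht : t ∈ Icc (0:ℝ) 1) :
    |a i t - b i t| ≤ dSupT a b := by
  have hbdd : BddAbove (range fun s : Icc (0:ℝ) 1 => |a i s - b i s|) := by
    rw [← image_eq_range (fun s => |a i s - b i s|)]
    exact (isCompact_Icc.image_of_continuousOn ((ha i).sub (hb i)).abs).bddAbove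
  exact (le_ciSup hbdd ⟨t, ht⟩).trans <|
    le_ciSup (f := fun j => ⨆ s : Icc (0:ℝ) 1, |a j s - b j s|) (finite_range _).bddAbove i

theorem dSupT_le {d : ℕ} {a b : Fin d → ℝ → ℝ} {C : ℝ} (hC : 0 ≤ C)
    (h : ∀ i, ∀ t ∈ Icc (0:ℝ) 1, |a i t - b i t| ≤ C) : dSupT a b ≤ C :=
  Real.iSup_le (fun i => Real.iSup_le (fun t => h i t t.2) hC) hC

theorem PinchingTuple.exists_pos_forall_dSupT_lt {d : ℕ} {a : Fin d → ℝ → ℝ}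
    (ha : IsNVTuple a) (hpa : PinchingTuple a) :
    ∃ ε > 0, ∀ b, IsNVTuple b → dSupT a b < ε → PinchingTuple b := by
  obtain ⟨δ, hδ, hball⟩ := Metric.isOpen_iff.1 (isOpen_setOf_pinchingExponents d) _ hpa
  obtain ⟨ε, hε, hε0⟩ := ((eventually_all.2 fun i => eventually_abs_lyapunovExponent_sub_lt
    (ha i).1.continuousOn (fun t _ => (ha i).2.2 t) hδ).and self_mem_nhdsWithin).exists
  refine ⟨ε, hε0, fun b hb hab => hball ?_⟩
  rw [Metric.mem_ball, dist_pi_lt_iff hδ]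
  intro i
  rw [Real.dist_eq, abs_sub_comm]
  exact hε i (b i) (hb i).1.continuousOn fun t ht =>
    (abs_sub_le_dSupT (fun j => (ha j).1.continuousOn) (fun j => (hb j).1.continuousOn) i ht).trans
      hab.le

theorem lyapunovExponent_exp_mul {f : ℝ → ℝ} (hf : ContinuousOn f (Icc 0 1))
    (hf0 : ∀ t ∈ Icc (0:ℝ) 1, f t ≠ 0) (c : ℝ) :
    lyapunovExponent (fun t => exp c * f t) = lyapunovExponent f + c := by
  have hlog : EqOn (fun s => log |exp c * f s|) (fun s => log |f s| + c) (uIcc 0 1) := by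
    intro s hs
    rw [uIcc_of_le zero_le_one] at hs
    simp only [abs_mul, abs_of_pos (exp_pos c), log_mul (exp_ne_zero c) (abs_ne_zero.2 (hf0 s hs)),
      log_exp, add_comm]
  rw [lyapunovExponent, intervalIntegral.integral_congr hlog, intervalIntegral.integral_add
    (intervalIntegrable_log_abs_of_continuousOn hf hf0) intervalIntegrable_const]
  simp [lyapunovExponent]

theorem IsNVTuple.exp_mul {d : ℕ} {a : Fin d → ℝ → ℝ} (ha : IsNVTuple a) (c : Fin d → ℝ) :
    IsNVTuple fun i t => exp (c i) * a i t :=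
  fun i => ⟨continuous_const.mul (ha i).1, fun t => by simp only [(ha i).2.1 t],
    fun t => mul_ne_zero (exp_ne_zero _) ((ha i).2.2 t)⟩

theorem tendstoUniformlyOn_exp_mul_mul {f : ℝ → ℝ} {K : Set ℝ} (hK : IsCompact K)
    (hf : ContinuousOn f K) (c : ℝ) :
    TendstoUniformlyOn (fun r t => exp (r * c) * f t) f (𝓝 0) K := by
  rw [Metric.tendstoUniformlyOn_iff]
  intro ε hε
  obtain ⟨v, hv, hvε⟩ := hK.mem_uniformity_of_prod (f := fun r t => exp (r * c) * f t)
    (by fun_prop) (mem_univ 0) (Metric.dist_mem_uniformity hε)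
  rw [nhdsWithin_univ] at hv
  filter_upwards [hv] with r hr t ht
  simpa [dist_comm] using hvε r hr t ht

theorem IsNVTuple.exists_pinchingTuple_dSupT_lt {d : ℕ} {a : Fin d → ℝ → ℝ} (ha : IsNVTuple a)
    {ε : ℝ} (hε : 0 < ε) : ∃ b, IsNVTuple b ∧ dSupT a b < ε ∧ PinchingTuple b := by
  set w : Fin d → ℝ := fun i => 2 ^ (i : ℕ)
  set l : Fin d → ℝ := fun i => lyapunovExponent (a i)
  have hclose : ∀ᶠ r in 𝓝 0, ∀ i, ∀ t ∈ Icc (0:ℝ) 1, dist (a i t) (exp (r * w i) * a i t) < ε / 2 :=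
    eventually_all.2 fun i => Metric.tendstoUniformlyOn_iff.1
      (tendstoUniformlyOn_exp_mul_mul isCompact_Icc (ha i).1.continuousOn (w i)) _ (half_pos hε)
  have hgood : ∀ᶠ r in 𝓝[≠] 0, r ∉ {r : ℝ | ∃ I J : Finset (Fin d), I ≠ J ∧
      ∑ i ∈ I, (l i + r * w i) = ∑ i ∈ J, (l i + r * w i)} :=
    nhdsNE_le_cofinite 0
      (finite_setOf_sum_add_mul_eq l w (injective_sum_two_pow d)).compl_mem_cofinite
  obtain ⟨r, hr_close, hr_good⟩ := ((hclose.filter_mono nhdsWithin_le_nhds).and hgood).exists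
  refine ⟨_, ha.exp_mul fun i => r * w i, ?_, ?_⟩
  · exact (dSupT_le (half_pos hε).le fun i t ht => (hr_close i t ht).le).trans_lt (half_lt_self hε)
  · rw [pinchingTuple_iff]
    simp only [lyapunovExponent_exp_mul (ha _).1.continuousOn fun t _ => (ha _).2.2 t]
    exact fun I J _ _ _ hIJ h => hr_good ⟨I, J, hIJ, h⟩

/-- The pinching tuples form an open and dense subset of the `d`-tuples of continuous
nowhere-vanishing functions `S¹ → ℝ`, for the sup distance. -/
theorem pinching_open_dense (d : ℕ) :
    -- openness
    (∀ a : Fin d → ℝ → ℝ, IsNVTuple a → PinchingTuple a →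
      ∃ ε > 0, ∀ b, IsNVTuple b → dSupT a b < ε → PinchingTuple b) ∧
    -- density
    (∀ a : Fin d → ℝ → ℝ, IsNVTuple a → ∀ ε > 0,
      ∃ b, IsNVTuple b ∧ dSupT a b < ε ∧ PinchingTuple b) :=
  ⟨fun _ ha hpa => hpa.exists_pos_forall_dSupT_lt ha,
    fun _ ha _ hε => ha.exists_pinchingTuple_dSupT_lt hε⟩
end

section
/- Let f : ℝ → ℝ be real-analytic and 1-periodic, and assume f is not identically zero. Then the function t ↦ log|f(t)| is Lebesgue-integrable on [0,1], i.e. ∫₀¹ |log|f(t)|| dt < ∞. -/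
open MeasureTheory

theorem log_abs_analytic_integrable_general (f : ℝ → ℝ) (hf : ∀ t, AnalyticAt ℝ f t) :
    IntegrableOn (fun t => abs (Real.log (abs (f t)))) (Set.Icc (0:ℝ) 1) volume := by
  have hmero : MeromorphicOn f (Set.uIcc 0 1) := fun t _ => (hf t).meromorphicAt
  have hlog := hmero.intervalIntegrable_log_norm
  rw [intervalIntegrable_iff_integrableOn_Icc_of_le zero_le_one] at hlog
  exact hlog.abs

/-- If `f : ℝ → ℝ` is real-analytic, 1-periodic and not identically zero, then
`t ↦ log|f(t)|` is Lebesgue-integrable on `[0,1]`. -/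
theorem log_abs_analytic_integrable (f : ℝ → ℝ) (hf : ∀ t, AnalyticAt ℝ f t)
    (hper : ∀ t, f (t + 1) = f t) (hne : ∃ t, f t ≠ 0) :
    IntegrableOn (fun t => abs (Real.log (abs (f t)))) (Set.Icc (0:ℝ) 1) volume :=
  log_abs_analytic_integrable_general f hf
end

section
/- Let g : ℝ → ℝ be continuously differentiable and 1-periodic, and assume that g′(t) ≠ 0 whenever g(t) = 0. Then g has only finitely many zeros in [0,1), and the function t ↦ log|g(t)| is Lebesgue-integrable on [0,1], i.e. ∫₀¹ |log|g(t)|| dt < ∞. -/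
/-!
Near a zero `x` of `g` with `g' x ≠ 0`, differentiability alone gives `|t - x| ≤ C |g t|`, so
`|log |g t|| ≤ |log |t - x|| + |log C|`, which is integrable near `x` because `log` is locally
integrable; away from the zeros `log |g|` is continuous. Hence `log |g|` is locally integrable, and
integrable on `[0, 1]`. The same nondegeneracy makes every zero isolated, so a compact set contains
only finitely many zeros.
-/

open MeasureTheory Filter Topology Asymptotics Real

lemma abs_log_le_abs_log_add_abs_log {a b C : ℝ} (hC : 0 < C) (ha : a ≠ 0)
    (hab : |a| ≤ C * |b|) (hb : |b| ≤ 1) : |log b| ≤ |log a| + |log C| := by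
  have hb0 : 0 < |b| := pos_of_mul_pos_right ((abs_pos.2 ha).trans_le hab) hC.le
  have hlog_le : log |a| ≤ log C + log |b| := by
    rw [← log_mul hC.ne' hb0.ne']
    exact log_le_log (abs_pos.2 ha) hab
  rw [← log_abs b, ← log_abs a, abs_of_nonpos (log_nonpos hb0.le hb)]
  linarith [neg_abs_le (log |a|), le_abs_self (log C)]

lemma HasDerivAt.isBigO_sub_rev {g : ℝ → ℝ} {g' x : ℝ} (hg : HasDerivAt g g' x) (hg' : g' ≠ 0) :
    (· - x) =O[𝓝 x] (g · - g x) :=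
  (hg.isTheta_sub hg').2.comp_tendsto (tendsto_id.prodMk tendsto_const_pure)

lemma integrableAtFilter_log_sub (x : ℝ) : IntegrableAtFilter (fun t => log (t - x)) (𝓝 x) := by
  refine ⟨Set.Icc (-1 + x) (1 + x), Icc_mem_nhds (by linarith) (by linarith), ?_⟩
  exact (intervalIntegrable_iff_integrableOn_Icc_of_le (by linarith)).1
    (intervalIntegral.intervalIntegrable_log'.comp_sub_right x)

lemma integrableAtFilter_log_abs_of_hasDerivAt {g : ℝ → ℝ} {g' x : ℝ} (hgm : Measurable g)
    (hg : HasDerivAt g g' x) (hg' : g' ≠ 0) (hx : g x = 0) :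
    IntegrableAtFilter (fun t => log (|g t|)) (𝓝 x) := by
  obtain ⟨C, hC, hCbound⟩ := (hg.isBigO_sub_rev hg').exists_pos
  have hsmall : ∀ᶠ t in 𝓝 x, |g t| ≤ 1 := by
    filter_upwards [hg.continuousAt.preimage_mem_nhds (Metric.closedBall_mem_nhds (g x) one_pos)]
      with t ht
    simpa [hx] using ht
  have hbound : ∀ᶠ t in 𝓝 x, |log (|g t|)| ≤ |log (t - x)| + |log C| := by
    filter_upwards [hCbound.bound, hsmall] with t ht h1
    rcases eq_or_ne t x with rfl | htx
    · simp [hx] -- `log 0 = 0`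
    · rw [log_abs]
      simp only [hx, sub_zero, norm_eq_abs] at ht
      exact abs_log_le_abs_log_add_abs_log hC (sub_ne_zero.2 htx) ht h1
  refine (IsBigO.of_bound' ?_).integrableAtFilter
    (measurable_log.comp hgm.abs).stronglyMeasurable.stronglyMeasurableAtFilter
    ((integrableAtFilter_log_sub x).norm.add (continuous_const (y := |log C|).integrableAt_nhds x))
  filter_upwards [hbound] with t ht
  rw [Pi.add_apply, norm_eq_abs, norm_eq_abs, norm_eq_abs,
    abs_of_nonneg (by positivity : 0 ≤ |log (t - x)| + |log C|)]
  exact ht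

theorem locallyIntegrable_log_abs {g : ℝ → ℝ} (hg : Differentiable ℝ g)
    (htr : ∀ t, g t = 0 → deriv g t ≠ 0) : LocallyIntegrable (fun t => log (|g t|)) := by
  have hgm : Measurable g := hg.continuous.measurable
  intro x
  by_cases hx : g x = 0
  · exact integrableAtFilter_log_abs_of_hasDerivAt hgm (hg x).hasDerivAt (htr x hx) hx
  · exact ((hg.continuous.continuousAt.abs).log (abs_ne_zero.2 hx)).tendsto.integrableAtFilter
      (measurable_log.comp hgm.abs).stronglyMeasurable.stronglyMeasurableAtFilter
      (volume.finiteAt_nhds x)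

theorem IsCompact.finite_inter_zeros {g : ℝ → ℝ} (hg : Differentiable ℝ g)
    (htr : ∀ t, g t = 0 → deriv g t ≠ 0) {K : Set ℝ} (hK : IsCompact K) :
    (K ∩ g ⁻¹' {0}).Finite := by
  refine (hK.inter_right (isClosed_singleton.preimage hg.continuous)).finite ?_
  refine isDiscrete_iff_nhdsNE.2 fun x hx => ?_
  rw [inf_principal_eq_bot]
  filter_upwards [(hg x).hasDerivAt.eventually_ne (c := 0) (htr x hx.2)] with t ht hmem
  exact ht hmem.2

theorem log_abs_transversal_integrable_general (g : ℝ → ℝ) (hg : ContDiff ℝ 1 g)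
    (htr : ∀ t, g t = 0 → deriv g t ≠ 0) :
    ({t : ℝ | t ∈ Set.Ico (0:ℝ) 1 ∧ g t = 0}).Finite ∧
      IntegrableOn (fun t => abs (Real.log (abs (g t)))) (Set.Icc (0:ℝ) 1) volume := by
  have hdiff : Differentiable ℝ g := hg.differentiable one_ne_zero
  refine ⟨((isCompact_Icc (a := 0) (b := 1)).finite_inter_zeros hdiff htr).subset ?_, ?_⟩
  · rintro t ⟨ht, hgt⟩
    exact ⟨Set.Ico_subset_Icc_self ht, hgt⟩
  · exact ((locallyIntegrable_log_abs hdiff htr).integrableOn_isCompact isCompact_Icc).abs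

/-- If `g : ℝ → ℝ` is `C¹`, 1-periodic, and all its zeros are transversal
(`g(t) = 0 → g′(t) ≠ 0`), then `g` has finitely many zeros in `[0,1)` and `t ↦ log|g(t)|`
is Lebesgue-integrable on `[0,1]`. -/
theorem log_abs_transversal_integrable (g : ℝ → ℝ) (hg : ContDiff ℝ 1 g)
    (hper : ∀ t, g (t + 1) = g t) (htr : ∀ t, g t = 0 → deriv g t ≠ 0) :
    ({t : ℝ | t ∈ Set.Ico (0:ℝ) 1 ∧ g t = 0}).Finite ∧
      IntegrableOn (fun t => abs (Real.log (abs (g t)))) (Set.Icc (0:ℝ) 1) volume :=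
  log_abs_transversal_integrable_general g hg htr
end
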